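/- Let F be an invertible element of A⊗A for a Hopf algebra A satisfying the twist equation F·(Δ⊗id)(F) = F^{↑1}·(id⊗Δ)(F), and define F_{m,n} = (Δ^{m-1}⊗Δ^{n-1})(F) with F_{m,0} = F_{0,m} = 1. Then F_{k,m}·F_{m+k,n} = (F_{m,n})^{↑k}·F_{k,m+n} for all m,n,k ≥ 0. -/

import Mathlib

open scoped TensorProduct

/-- An `R`-algebra bundled with its instances. -/
structure AlgPack (R : Type) [CommRing R] where
  carrier : Type
  [ring : Ring carrier]
  [alg : Algebra R carrier]

attribute [instance] AlgPack.ring AlgPack.alg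

/-- The tower of tensor powers `A^{⊗n}` (with `A^{⊗0} = R`), bundled with instances. -/
noncomputable def TPpack (R A : Type) [CommRing R] [Ring A] [Bialgebra R A] :
    ℕ → AlgPack R
  | 0 => ⟨R⟩
  | n + 1 => ⟨TensorProduct R A (TPpack R A n).carrier⟩

/-- The tensor power `A^{⊗n}` (so `TP R A 0 = R`, `TP R A (n+1) = A ⊗ TP R A n`). -/
noncomputable def TP (R A : Type) [CommRing R] [Ring A] [Bialgebra R A] (n : ℕ) : Type :=
  (TPpack R A n).carrier

noncomputable instance (R A : Type) [CommRing R] [Ring A] [Bialgebra R A] (n : ℕ) :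
    Ring (TP R A n) := (TPpack R A n).ring

noncomputable instance (R A : Type) [CommRing R] [Ring A] [Bialgebra R A] (n : ℕ) :
    Algebra R (TP R A n) := (TPpack R A n).alg

variable (R A : Type) [CommRing R] [Ring A] [Bialgebra R A]

/-- Transport along an equality of tensor-power degrees. -/
noncomputable def castTP {a b : ℕ} (h : a = b) : TP R A a ≃ₐ[R] TP R A b := by
  subst h; exact AlgEquiv.refl

/-- The iterated coproduct `Δ^n : A → A^{⊗(n+1)}` (`Δ^0 = id`, realized as
`A ≅ A ⊗ R`). -/
noncomputable def Dpow : (n : ℕ) → (A →ₐ[R] TP R A (n + 1))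
  | 0 => Algebra.TensorProduct.includeLeft
  | n + 1 =>
      (Algebra.TensorProduct.map (AlgHom.id R A) (Dpow n)).comp
        (Bialgebra.comulAlgHom R A)

/-- The coproduct applied to the first tensor factor: `Δ ⊗ id : A^{⊗(j+1)} → A^{⊗(j+2)}`. -/
noncomputable def DFirst (j : ℕ) : TP R A (j + 1) →ₐ[R] TP R A (j + 2) :=
  (Algebra.TensorProduct.assoc R R R A A (TP R A j)).toAlgHom.comp
    (Algebra.TensorProduct.map (Bialgebra.comulAlgHom R A) (AlgHom.id R (TP R A j)))

/-- The `m`-fold iteration of the coproduct on the first tensor factor. -/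
noncomputable def DFirstIter :
    (m j : ℕ) → (TP R A (j + 1) →ₐ[R] TP R A (j + 1 + m))
  | 0, j => AlgHom.id R (TP R A (j + 1))
  | m + 1, j =>
      (castTP R A (show j + m + 2 = j + 1 + (m + 1) by omega)).toAlgHom.comp
        ((DFirst R A (j + m)).comp
          ((castTP R A (show j + 1 + m = j + m + 1 by omega)).toAlgHom.comp
            (DFirstIter m j)))

/-- Appending a factor `1` on the right: `A^{⊗j} → A^{⊗(j+1)}`, `x ↦ x ⊗ 1`. -/
noncomputable def padOne : (j : ℕ) → (TP R A j →ₐ[R] TP R A (j + 1))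
  | 0 => Algebra.ofId R (TP R A 1)
  | j + 1 => Algebra.TensorProduct.map (AlgHom.id R A) (padOne j)

/-- `x ↦ x ⊗ 1^{⊗l} : A^{⊗j} → A^{⊗(j+l)}` (the implicit extension by identity factors
on the right). -/
noncomputable def padRight : (l : ℕ) → (j : ℕ) → (TP R A j →ₐ[R] TP R A (j + l))
  | 0, j => AlgHom.id R (TP R A j)
  | l + 1, j => (padOne R A (j + l)).comp (padRight l j)

/-- The shift `x ↦ 1^{⊗l} ⊗ x = x^{↑l} : A^{⊗j} → A^{⊗(j+l)}` (new factors on the left). -/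
noncomputable def padLeft : (l : ℕ) → (j : ℕ) → (TP R A j →ₐ[R] TP R A (j + l))
  | 0, j => AlgHom.id R (TP R A j)
  | l + 1, j =>
      ((Algebra.TensorProduct.includeRight :
          TP R A (j + l) →ₐ[R] A ⊗[R] TP R A (j + l)) :
        TP R A (j + l) →ₐ[R] TP R A (j + l + 1)).comp (padLeft l j)

/-- `F_{m,n} = (Δ^{m-1} ⊗ Δ^{n-1})(F) ∈ A^{⊗(m+n)}`, with `F_{m,0} = F_{0,n} = 1`. -/
noncomputable def Fmn (F : TP R A 2) : (m n : ℕ) → TP R A (m + n)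
  | 0, _ => 1
  | _ + 1, 0 => 1
  | m + 1, n + 1 =>
      castTP R A (show n + 2 + m = m + 1 + (n + 1) by omega)
        (DFirstIter R A m (n + 1)
          (Algebra.TensorProduct.map (AlgHom.id R A)
            ((Dpow R A n).comp (Algebra.TensorProduct.rid R R A).toAlgHom) F))

/-- `(id ⊗ Δ)` on `A^{⊗2}`, applying the coproduct to the second tensor factor. -/
noncomputable def DSecond : TP R A 2 →ₐ[R] TP R A 3 :=
  Algebra.TensorProduct.map (AlgHom.id R A) (DFirst R A 0)


section Helpers
variable {R A}

@[simp] theorem castTP_same {a : ℕ} (h : a = a) (x : TP R A a) :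
    castTP R A h x = x := rfl

@[simp] theorem castTP_castTP {a b d : ℕ} (h1 : a = b) (h2 : b = d) (x : TP R A a) :
    castTP R A h2 (castTP R A h1 x) = castTP R A (h1.trans h2) x := by
  subst h1; subst h2; rfl

@[simp] theorem castTP_mul {a b : ℕ} (h : a = b) (x y : TP R A a) :
    castTP R A h (x * y) = castTP R A h x * castTP R A h y := map_mul _ _ _

@[simp] theorem castTP_one {a b : ℕ} (h : a = b) :
    castTP R A h (1 : TP R A a) = 1 := map_one _

theorem DFirst_cast {a b : ℕ} (h1 : a + 1 = b + 1) (h2 : a + 2 = b + 2) (x : TP R A (a+1)) :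
    DFirst R A b (castTP R A h1 x) = castTP R A h2 (DFirst R A a x) := by
  obtain rfl : a = b := by omega
  rfl

theorem padOne_cast {a b : ℕ} (h : a = b) (h1 : a + 1 = b + 1) (x : TP R A a) :
    padOne R A b (castTP R A h x) = castTP R A h1 (padOne R A a x) := by
  subst h; rfl

theorem padRight_cast {l a b : ℕ} (h : a = b) (h1 : a + l = b + l) (x : TP R A a) :
    padRight R A l b (castTP R A h x) = castTP R A h1 (padRight R A l a x) := by
  subst h; rfl

theorem padLeft_cast {l a b : ℕ} (h : a = b) (h1 : a + l = b + l) (x : TP R A a) :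
    padLeft R A l b (castTP R A h x) = castTP R A h1 (padLeft R A l a x) := by
  subst h; rfl

theorem Fmn_cast {F : TP R A 2} {a b d e : ℕ} (h1 : a = b) (h2 : d = e) (h3 : a + d = b + e) :
    Fmn R A F b e = castTP R A h3 (Fmn R A F a d) := by
  subst h1; subst h2; rfl

theorem Fmn_zero_right (F : TP R A 2) (k : ℕ) : Fmn R A F k 0 = 1 := by
  cases k <;> rfl

theorem Fmn_zero_left (F : TP R A 2) (n : ℕ) : Fmn R A F 0 n = 1 := rfl

end Helpers

section Core

/-- `Δ⊗id : A ⊗ B → A ⊗ (A ⊗ B)` in general. -/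
noncomputable def DGen (B : Type) [Ring B] [Algebra R B] :
    A ⊗[R] B →ₐ[R] A ⊗[R] (A ⊗[R] B) :=
  (Algebra.TensorProduct.assoc R R R A A B).toAlgHom.comp
    (Algebra.TensorProduct.map (Bialgebra.comulAlgHom R A) (AlgHom.id R B))

variable {R A}

theorem DFirst_eq_DGen (j : ℕ) (x : TP R A (j+1)) :
    DFirst R A j x = DGen R A (TP R A j) x := rfl

theorem DGen_tmul {B : Type} [Ring B] [Algebra R B] (a : A) (t : B) :
    DGen R A B (a ⊗ₜ[R] t) =
      (Algebra.TensorProduct.assoc R R R A A B) ((Coalgebra.comul a) ⊗ₜ[R] t) := by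
  simp [DGen]

theorem beta_lemma {B : Type} [Ring B] [Algebra R B] (w : A ⊗[R] A) (s : B) :
    (Algebra.TensorProduct.assoc R R R A A B) (w ⊗ₜ[R] s) =
      (LinearMap.lTensor A ((TensorProduct.mk R A B).flip s)) w := by
  induction w using TensorProduct.induction_on with
  | zero => simp [TensorProduct.zero_tmul]
  | add x y hx hy => simp [TensorProduct.add_tmul, hx, hy]
  | tmul a b => simp

theorem mapid_congr {B C : Type} [Ring B] [Ring C] [Algebra R B] [Algebra R C]
    {f g : B →ₐ[R] C} (h : ∀ b, f b = g b) (x : A ⊗[R] B) :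
    Algebra.TensorProduct.map (AlgHom.id R A) f x =
      Algebra.TensorProduct.map (AlgHom.id R A) g x := by
  have : f = g := AlgHom.ext h
  subst this; rfl

theorem mapid_comp {B C D : Type} [Ring B] [Ring C] [Ring D]
    [Algebra R B] [Algebra R C] [Algebra R D]
    (f : C →ₐ[R] D) (g : B →ₐ[R] C) (x : A ⊗[R] B) :
    Algebra.TensorProduct.map (AlgHom.id R A) f
        (Algebra.TensorProduct.map (AlgHom.id R A) g x) =
      Algebra.TensorProduct.map (AlgHom.id R A) (f.comp g) x := by
  induction x using TensorProduct.induction_on with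
  | zero => simp
  | add x y hx hy => simp [hx, hy]
  | tmul a b => simp

theorem mapid_one_tmul {B C : Type} [Ring B] [Ring C] [Algebra R B] [Algebra R C]
    (f : B →ₐ[R] C) (b : B) :
    Algebra.TensorProduct.map (AlgHom.id R A) f ((1:A) ⊗ₜ[R] b) = (1:A) ⊗ₜ[R] f b := by
  simp

theorem algAssoc_eq_linAssoc (z : (A ⊗[R] A) ⊗[R] A) :
    (Algebra.TensorProduct.assoc R R R A A A) z = (TensorProduct.assoc R A A A) z := by
  induction z using TensorProduct.induction_on with
  | zero => simp
  | add x y hx hy => simp [hx, hy]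
  | tmul w c =>
    induction w using TensorProduct.induction_on with
    | zero => simp [TensorProduct.zero_tmul]
    | add x y hx hy => simp [TensorProduct.add_tmul, hx, hy]
    | tmul a b => simp

theorem mapDelta_eq_rTensor (z : A ⊗[R] A) :
    Algebra.TensorProduct.map (Bialgebra.comulAlgHom R A) (AlgHom.id R A) z =
      LinearMap.rTensor A (Coalgebra.comul (R := R)) z := by
  induction z using TensorProduct.induction_on with
  | zero => simp
  | add x y hx hy => simp [hx, hy]
  | tmul a b => simp

theorem mapidDelta_eq_lTensor (z : A ⊗[R] A) :
    Algebra.TensorProduct.map (AlgHom.id R A) (Bialgebra.comulAlgHom R A) z =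
      LinearMap.lTensor A (Coalgebra.comul (R := R)) z := by
  induction z using TensorProduct.induction_on with
  | zero => simp
  | add x y hx hy => simp [hx, hy]
  | tmul a b => simp

theorem coassoc_elem (x : A) :
    (Algebra.TensorProduct.assoc R R R A A A)
        (Algebra.TensorProduct.map (Bialgebra.comulAlgHom R A) (AlgHom.id R A)
          (Coalgebra.comul x)) =
      Algebra.TensorProduct.map (AlgHom.id R A) (Bialgebra.comulAlgHom R A)
        (Coalgebra.comul x) := by
  have h := LinearMap.congr_fun (Coalgebra.coassoc (R := R) (A := A)) x
  simp only [LinearMap.comp_apply, LinearEquiv.coe_coe] at h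
  rw [mapDelta_eq_rTensor, mapidDelta_eq_lTensor, algAssoc_eq_linAssoc]
  exact h

end Core

section KeyLemmas
variable {R A}

theorem DGen_map {B C : Type} [Ring B] [Ring C] [Algebra R B] [Algebra R C]
    (f : B →ₐ[R] C) (x : A ⊗[R] B) :
    DGen R A C (Algebra.TensorProduct.map (AlgHom.id R A) f x) =
      Algebra.TensorProduct.map (AlgHom.id R A)
        (Algebra.TensorProduct.map (AlgHom.id R A) f) (DGen R A B x) := by
  induction x using TensorProduct.induction_on with
  | zero => simp
  | add x y hx hy => simp [hx, hy]
  | tmul a t =>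
    rw [Algebra.TensorProduct.map_tmul, AlgHom.coe_id, id_eq, DGen_tmul, DGen_tmul]
    generalize Coalgebra.comul (R := R) a = z
    induction z using TensorProduct.induction_on with
    | zero => simp [TensorProduct.zero_tmul]
    | add x y hx hy => simp [TensorProduct.add_tmul, hx, hy]
    | tmul p q => simp

set_option maxHeartbeats 1000000 in
theorem DGen_DGen {B : Type} [Ring B] [Algebra R B] (x : A ⊗[R] B) :
    DGen R A (A ⊗[R] B) (DGen R A B x) =
      Algebra.TensorProduct.map (AlgHom.id R A) (DGen R A B) (DGen R A B x) := by
  induction x using TensorProduct.induction_on with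
  | zero => simp
  | add x y hx hy => simp [hx, hy]
  | tmul a t =>
    rw [DGen_tmul]
    have claim1 : ∀ z : A ⊗[R] A,
        DGen R A (A ⊗[R] B) ((Algebra.TensorProduct.assoc R R R A A B) (z ⊗ₜ[R] t)) =
          (LinearMap.lTensor A (LinearMap.lTensor A ((TensorProduct.mk R A B).flip t)))
            ((TensorProduct.assoc R A A A)
              ((LinearMap.rTensor A (Coalgebra.comul (R := R))) z)) := by
      intro z
      induction z using TensorProduct.induction_on with
      | zero => simp [TensorProduct.zero_tmul]
      | add x y hx hy => simp [TensorProduct.add_tmul, hx, hy]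
      | tmul p q =>
        rw [Algebra.TensorProduct.assoc_tmul, DGen_tmul, beta_lemma,
          LinearMap.rTensor_tmul]
        generalize Coalgebra.comul (R := R) p = w
        induction w using TensorProduct.induction_on with
        | zero => simp [TensorProduct.zero_tmul]
        | add x y hx hy => simp [TensorProduct.add_tmul, hx, hy]
        | tmul u v => simp
    have claim2 : ∀ z : A ⊗[R] A,
        Algebra.TensorProduct.map (AlgHom.id R A) (DGen R A B)
            ((Algebra.TensorProduct.assoc R R R A A B) (z ⊗ₜ[R] t)) =
          (LinearMap.lTensor A (LinearMap.lTensor A ((TensorProduct.mk R A B).flip t)))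
            ((LinearMap.lTensor A (Coalgebra.comul (R := R))) z) := by
      intro z
      induction z using TensorProduct.induction_on with
      | zero => simp [TensorProduct.zero_tmul]
      | add x y hx hy => simp [TensorProduct.add_tmul, hx, hy]
      | tmul p q =>
        rw [Algebra.TensorProduct.assoc_tmul, Algebra.TensorProduct.map_tmul,
          AlgHom.coe_id, id_eq, DGen_tmul, beta_lemma, LinearMap.lTensor_tmul]
        generalize Coalgebra.comul (R := R) q = w
        induction w using TensorProduct.induction_on with
        | zero => simp [TensorProduct.zero_tmul]
        | add x y hx hy => simp [TensorProduct.add_tmul, hx, hy]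
        | tmul u v => simp
    have h := LinearMap.congr_fun (Coalgebra.coassoc (R := R) (A := A)) a
    simp only [LinearMap.comp_apply, LinearEquiv.coe_coe] at h
    rw [claim1, claim2, h]

end KeyLemmas

/-- `id ⊗ Δ ⊗ id…` : coproduct on the second tensor leg. -/
noncomputable def D2 (j : ℕ) : TP R A (j+2) →ₐ[R] TP R A (j+3) :=
  Algebra.TensorProduct.map (AlgHom.id R A) (DFirst R A j)

/-- coproduct on the third tensor leg. -/
noncomputable def D3 (j : ℕ) : TP R A (j+3) →ₐ[R] TP R A (j+4) :=
  Algebra.TensorProduct.map (AlgHom.id R A) (D2 R A j)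

section Derived
variable {R A}

theorem DGen_apply {B : Type} [Ring B] [Algebra R B] (z : A ⊗[R] B) :
    DGen R A B z = (Algebra.TensorProduct.assoc R R R A A B)
      (Algebra.TensorProduct.map (Bialgebra.comulAlgHom R A) (AlgHom.id R B) z) := rfl

theorem D2_cast {a b : ℕ} (h1 : a + 2 = b + 2) (h2 : a + 3 = b + 3) (x : TP R A (a+2)) :
    D2 R A b (castTP R A h1 x) = castTP R A h2 (D2 R A a x) := by
  obtain rfl : a = b := by omega
  rfl

theorem D3_cast {a b : ℕ} (h1 : a + 3 = b + 3) (h2 : a + 4 = b + 4) (x : TP R A (a+3)) :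
    D3 R A b (castTP R A h1 x) = castTP R A h2 (D3 R A a x) := by
  obtain rfl : a = b := by omega
  rfl

theorem C2 (j : ℕ) (x : TP R A (j+1)) :
    D2 R A j (DFirst R A j x) = DFirst R A (j+1) (DFirst R A j x) :=
  (DGen_DGen (R := R) (A := A) (B := TP R A j) x).symm

theorem C3 (j : ℕ) (x : TP R A (j+2)) :
    D3 R A j (DFirst R A (j+1) x) = DFirst R A (j+2) (D2 R A j x) :=
  (DGen_map (R := R) (A := A) (f := DFirst R A j) x).symm

theorem DFirst_Dpow (n : ℕ) (x : A) :
    DFirst R A n (Dpow R A n x) = Dpow R A (n+1) x := by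
  induction n with
  | zero =>
    have key : ∀ z : A ⊗[R] A, (Algebra.TensorProduct.assoc R R R A A R) (z ⊗ₜ[R] (1:R)) =
        Algebra.TensorProduct.map (AlgHom.id R A)
          (Algebra.TensorProduct.includeLeft (S := R)) z := by
      intro z
      induction z using TensorProduct.induction_on with
      | zero => simp [TensorProduct.zero_tmul]
      | add x y hx hy => simp [TensorProduct.add_tmul, hx, hy]
      | tmul p q => simp [Algebra.TensorProduct.includeLeft_apply]
    exact (DGen_tmul x (1:R)).trans ((key _).trans rfl)
  | succ n _ =>
    have h2 : DGen R A A (Coalgebra.comul x) =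
        Algebra.TensorProduct.map (AlgHom.id R A) (Bialgebra.comulAlgHom R A)
          (Coalgebra.comul x) :=
      (DGen_apply _).trans (coassoc_elem x)
    have h1 := DGen_map (R := R) (A := A) (f := Dpow R A n) (Coalgebra.comul x)
    rw [h2, mapid_comp] at h1
    exact h1

end Derived

section Pads
variable {R A}

theorem DFirst_padOne (j : ℕ) (x : TP R A (j+1)) :
    DFirst R A (j+1) (padOne R A (j+1) x) = padOne R A (j+2) (DFirst R A j x) :=
  DGen_map (R := R) (A := A) (f := padOne R A j) x

set_option maxHeartbeats 1000000 in
theorem D2_padOne (j : ℕ) (y : TP R A (j+2)) :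
    D2 R A (j+1) (padOne R A (j+2) y) = padOne R A (j+3) (D2 R A j y) :=
  (mapid_comp _ _ _).trans ((mapid_congr (fun b => DFirst_padOne j b) y).trans
    (mapid_comp _ _ _).symm)

set_option maxHeartbeats 1000000 in
theorem D3_padOne (j : ℕ) (y : TP R A (j+3)) :
    D3 R A (j+1) (padOne R A (j+3) y) = padOne R A (j+4) (D3 R A j y) :=
  (mapid_comp _ _ _).trans ((mapid_congr (fun b => D2_padOne j b) y).trans
    (mapid_comp _ _ _).symm)

theorem DFirst_padOne_zero (r : TP R A 0) :
    DFirst R A 0 (padOne R A 0 r) = padOne R A 1 (padOne R A 0 r) := by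
  letI : Subsingleton (TP R A 0 →ₐ[R] TP R A 2) :=
    inferInstanceAs (Subsingleton (R →ₐ[R] TP R A 2))
  exact AlgHom.congr_fun
    (Subsingleton.elim ((DFirst R A 0).comp (padOne R A 0))
      ((padOne R A 1).comp (padOne R A 0))) r

set_option maxHeartbeats 1000000 in
theorem D3_padTwice (x : TP R A 2) :
    D3 R A 0 (padOne R A 2 x) = padOne R A 3 (padOne R A 2 x) :=
  (mapid_comp _ _ _).trans ((mapid_congr (fun b =>
      (mapid_comp _ _ _).trans ((mapid_congr (fun r => DFirst_padOne_zero r) b).trans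
        (mapid_comp _ _ _).symm)) x).trans
    (mapid_comp _ _ _).symm)

theorem DFirst_one_tmul (j : ℕ) (t : TP R A j) :
    DFirst R A j ((1:A) ⊗ₜ[R] t) = (1:A) ⊗ₜ[R] ((1:A) ⊗ₜ[R] t) := by
  have : DFirst R A j ((1:A) ⊗ₜ[R] t) = (Algebra.TensorProduct.assoc R R R A A (TP R A j))
      ((Coalgebra.comul (1:A)) ⊗ₜ[R] t) := DGen_tmul 1 t
  rw [this]
  have h1 : Coalgebra.comul (R := R) (1:A) = (1:A) ⊗ₜ[R] (1:A) := by
    have := map_one (Bialgebra.comulAlgHom R A)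
    rw [show (Bialgebra.comulAlgHom R A) 1 = Coalgebra.comul (R := R) (1:A) from rfl] at this
    rw [this, Algebra.TensorProduct.one_def]
  rw [h1, Algebra.TensorProduct.assoc_tmul]

theorem D2_one_tmul (j : ℕ) (y : TP R A (j+1)) :
    D2 R A j ((1:A) ⊗ₜ[R] y) = (1:A) ⊗ₜ[R] DFirst R A j y := by
  have h := Algebra.TensorProduct.map_tmul (AlgHom.id R A) (DFirst R A j) (1:A) y
  rw [show ((AlgHom.id R A) (1:A)) = (1:A) from rfl] at h
  exact h

theorem D3_one_tmul (j : ℕ) (y : TP R A (j+2)) :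
    D3 R A j ((1:A) ⊗ₜ[R] y) = (1:A) ⊗ₜ[R] D2 R A j y := by
  have h := Algebra.TensorProduct.map_tmul (AlgHom.id R A) (D2 R A j) (1:A) y
  rw [show ((AlgHom.id R A) (1:A)) = (1:A) from rfl] at h
  exact h

theorem padLeft_succ_apply (l j : ℕ) (x : TP R A j) :
    padLeft R A (l+1) j x = (1:A) ⊗ₜ[R] padLeft R A l j x := rfl

theorem DFirst_padLeft (k j : ℕ) (x : TP R A j) :
    DFirst R A (j+k) (padLeft R A (k+1) j x) = padLeft R A (k+2) j x := by
  exact (congrArg (DFirst R A (j+k)) (padLeft_succ_apply k j x)).trans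
    ((DFirst_one_tmul (j+k) (padLeft R A k j x)).trans rfl)

theorem DFirst_padRight (n q : ℕ) (x : TP R A (q+1)) :
    ∀ (h1 : q+1+n = q+n+1) (h2 : q+2+n = q+n+2),
    DFirst R A (q+n) (castTP R A h1 (padRight R A n (q+1) x)) =
      castTP R A h2 (padRight R A n (q+2) (DFirst R A q x)) := by
  induction n with
  | zero => intro h1 h2; rfl
  | succ n ih =>
    intro h1 h2
    calc DFirst R A (q+(n+1)) (castTP R A h1 (padRight R A (n+1) (q+1) x))
        = DFirst R A (q+(n+1)) (padOne R A (q+n+1)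
            (castTP R A (by first | omega | (simp only [Nat.add_eq]; omega)) (padRight R A n (q+1) x))) :=
          congrArg _ (padOne_cast (by first | omega | (simp only [Nat.add_eq]; omega)) h1 (padRight R A n (q+1) x)).symm
      _ = padOne R A (q+n+2) (DFirst R A (q+n)
            (castTP R A (by first | omega | (simp only [Nat.add_eq]; omega)) (padRight R A n (q+1) x))) := DFirst_padOne _ _
      _ = padOne R A (q+n+2) (castTP R A (by first | omega | (simp only [Nat.add_eq]; omega))
            (padRight R A n (q+2) (DFirst R A q x))) := congrArg _ (ih _ _)
      _ = castTP R A h2 (padRight R A (n+1) (q+2) (DFirst R A q x)) :=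
          padOne_cast _ _ _

theorem D2_padRight (n q : ℕ) (x : TP R A (q+2)) :
    ∀ (h1 : q+2+n = q+n+2) (h2 : q+3+n = q+n+3),
    D2 R A (q+n) (castTP R A h1 (padRight R A n (q+2) x)) =
      castTP R A h2 (padRight R A n (q+3) (D2 R A q x)) := by
  induction n with
  | zero => intro h1 h2; rfl
  | succ n ih =>
    intro h1 h2
    calc D2 R A (q+(n+1)) (castTP R A h1 (padRight R A (n+1) (q+2) x))
        = D2 R A (q+(n+1)) (padOne R A (q+n+2)
            (castTP R A (by first | omega | (simp only [Nat.add_eq]; omega)) (padRight R A n (q+2) x))) :=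
          congrArg _ (padOne_cast (by first | omega | (simp only [Nat.add_eq]; omega)) h1 (padRight R A n (q+2) x)).symm
      _ = padOne R A (q+n+3) (D2 R A (q+n)
            (castTP R A (by first | omega | (simp only [Nat.add_eq]; omega)) (padRight R A n (q+2) x))) := D2_padOne _ _
      _ = padOne R A (q+n+3) (castTP R A (by first | omega | (simp only [Nat.add_eq]; omega))
            (padRight R A n (q+3) (D2 R A q x))) := congrArg _ (ih _ _)
      _ = castTP R A h2 (padRight R A (n+1) (q+3) (D2 R A q x)) :=
          padOne_cast _ _ _

theorem D3_padRight_dup (n : ℕ) (x : TP R A 2) :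
    ∀ (h1 : 2+(n+1) = n+3) (h2 : 2+(n+2) = n+4),
    D3 R A n (castTP R A h1 (padRight R A (n+1) 2 x)) =
      castTP R A h2 (padRight R A (n+2) 2 x) := by
  induction n with
  | zero =>
    intro h1 h2
    exact D3_padTwice x
  | succ n ih =>
    intro h1 h2
    calc D3 R A (n+1) (castTP R A h1 (padRight R A (n+2) 2 x))
        = D3 R A (n+1) (padOne R A (n+3)
            (castTP R A (by first | omega | (simp only [Nat.add_eq]; omega)) (padRight R A (n+1) 2 x))) :=
          congrArg _ (padOne_cast (by first | omega | (simp only [Nat.add_eq]; omega)) h1 (padRight R A (n+1) 2 x)).symm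
      _ = padOne R A (n+4) (D3 R A n
            (castTP R A (by first | omega | (simp only [Nat.add_eq]; omega)) (padRight R A (n+1) 2 x))) := D3_padOne _ _
      _ = padOne R A (n+4) (castTP R A (by first | omega | (simp only [Nat.add_eq]; omega)) (padRight R A (n+2) 2 x)) :=
          congrArg _ (ih _ _)
      _ = castTP R A h2 (padRight R A (n+3) 2 x) := padOne_cast _ _ _

end Pads

/-- inner building block of `Fmn`. -/
noncomputable def Gmap (n : ℕ) : TP R A 2 →ₐ[R] TP R A (n+2) :=
  Algebra.TensorProduct.map (AlgHom.id R A)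
    ((Dpow R A n).comp (Algebra.TensorProduct.rid R R A).toAlgHom)

/-- `F_{k+1,n+1}` in uncast normal form. -/
noncomputable def W (F : TP R A 2) (k n : ℕ) : TP R A (n+2+k) :=
  DFirstIter R A k (n+1) (Gmap R A n F)

section WLemmas
variable {R A}
variable (F : TP R A 2)

theorem Fmn_succ (k n : ℕ) (h : n+2+k = k+1+(n+1)) :
    Fmn R A F (k+1) (n+1) = castTP R A h (W R A F k n) := rfl

theorem W_zero (n : ℕ) : W R A F 0 n = Gmap R A n F := rfl

theorem W_succ (k n : ℕ) (h1 : n+2+k = n+1+k+1) (h2 : n+2+(k+1) = n+1+k+2) :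
    castTP R A h2 (W R A F (k+1) n) = DFirst R A (n+1+k) (castTP R A h1 (W R A F k n)) := by
  have e : W R A F (k+1) n = castTP R A (by omega)
      (DFirst R A (n+1+k) (castTP R A (by omega) (W R A F k n))) := rfl
  rw [e, castTP_castTP, castTP_same]

theorem W_D2 (n : ℕ) : D2 R A n (W R A F 0 n) = W R A F 0 (n+1) :=
  (mapid_comp _ _ _).trans
    (mapid_congr (g := (Dpow R A (n+1)).comp (Algebra.TensorProduct.rid R R A).toAlgHom)
      (fun b => DFirst_Dpow n _) F)

theorem D2_Dpow (n : ℕ) (x : A) :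
    D2 R A n (Dpow R A (n+1) x) = Dpow R A (n+2) x :=
  (mapid_comp _ _ _).trans
    (mapid_congr (g := Dpow R A (n+1)) (fun b => DFirst_Dpow n b) _)

theorem W_D3_low (n : ℕ) : D3 R A n (W R A F 0 (n+1)) = W R A F 0 (n+2) :=
  (mapid_comp _ _ _).trans
    (mapid_congr (g := (Dpow R A (n+2)).comp (Algebra.TensorProduct.rid R R A).toAlgHom)
      (fun b => D2_Dpow n _) F)

theorem W_D3 (n : ℕ) : D3 R A n (W R A F 1 n) = W R A F 1 (n+1) := by
  show D3 R A n (DFirst R A (n+1) (W R A F 0 n)) = DFirst R A (n+2) (W R A F 0 (n+1))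
  rw [C3 n (W R A F 0 n), W_D2]

theorem W_D2_high (k n : ℕ) (h1 : n+2+(k+1) = n+1+k+2) (h2 : n+2+(k+2) = n+1+k+3) :
    D2 R A (n+1+k) (castTP R A h1 (W R A F (k+1) n)) = castTP R A h2 (W R A F (k+2) n) := by
  calc D2 R A (n+1+k) (castTP R A h1 (W R A F (k+1) n))
      = D2 R A (n+1+k) (DFirst R A (n+1+k)
          (castTP R A (by omega) (W R A F k n))) :=
        congrArg _ (W_succ F k n (by omega) h1)
    _ = DFirst R A (n+1+k+1) (DFirst R A (n+1+k)
          (castTP R A (by omega) (W R A F k n))) := C2 _ _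
    _ = DFirst R A (n+1+k+1) (castTP R A (by omega) (W R A F (k+1) n)) :=
        congrArg _ (W_succ F k n (by omega) (by omega)).symm
    _ = castTP R A h2 (W R A F (k+2) n) :=
        (W_succ F (k+1) n (by omega) (by omega)).symm

theorem Fmn11 : Fmn R A F 1 1 = F := by
  show Gmap R A 0 F = F
  have inner : ∀ b : A ⊗[R] R,
      ((Dpow R A 0).comp (Algebra.TensorProduct.rid R R A).toAlgHom) b = (AlgHom.id R _) b := by
    intro b
    induction b using TensorProduct.induction_on with
    | zero => exact (map_zero _).trans (map_zero _).symm
    | add x y hx hy =>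
      rw [map_add, map_add, hx, hy]; rfl
    | tmul a r =>
      show (Algebra.TensorProduct.includeLeft (S := R))
          ((Algebra.TensorProduct.rid R R A) (a ⊗ₜ[R] r)) = a ⊗ₜ[R] r
      rw [Algebra.TensorProduct.rid_tmul, Algebra.TensorProduct.includeLeft_apply,
        TensorProduct.smul_tmul, smul_eq_mul, mul_one]
  have := mapid_congr (R := R) (A := A)
    (f := (Dpow R A 0).comp (Algebra.TensorProduct.rid R R A).toAlgHom)
    (g := AlgHom.id R (A ⊗[R] R)) inner F
  rw [show Gmap R A 0 F = Algebra.TensorProduct.map (AlgHom.id R A)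
    ((Dpow R A 0).comp (Algebra.TensorProduct.rid R R A).toAlgHom) F from rfl, this]
  exact congrFun (congrArg _ (Algebra.TensorProduct.map_id (R := R))) F

theorem g1_eq : ∀ b : A ⊗[R] R,
    (Dpow R A 1) ((Algebra.TensorProduct.rid R R A) b) = DFirst R A 0 b := by
  intro b
  induction b using TensorProduct.induction_on with
  | zero => exact (map_zero _).trans (map_zero _).symm
  | add x y hx hy => rw [map_add, map_add, hx, hy]; exact (map_add _ _ _).symm
  | tmul a r =>
    rw [Algebra.TensorProduct.rid_tmul, map_smul]
    have e1 : (a ⊗ₜ[R] r : A ⊗[R] R) = r • (a ⊗ₜ[R] (1:R)) := by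
      rw [TensorProduct.smul_tmul', TensorProduct.smul_tmul, smul_eq_mul, mul_one]
    rw [e1]
    exact ((map_smul (DFirst R A 0) r (a ⊗ₜ[R] (1:R) : TP R A 1)).trans
      (congrArg _ (DFirst_Dpow 0 a))).symm

theorem Fmn12 : Fmn R A F 1 2 = DSecond R A F := by
  show Gmap R A 1 F = DSecond R A F
  exact mapid_congr (R := R) (A := A) (B := A ⊗[R] R) (C := TP R A 2)
    (f := (Dpow R A 1).comp (Algebra.TensorProduct.rid R R A).toAlgHom)
    (g := DFirst R A 0) (fun b => g1_eq b) F

end WLemmas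

section MoreHelpers
variable {R A}

theorem castTP_one_tmul {a b : ℕ} (h : a = b) (h1 : a+1 = b+1) (y : TP R A a) :
    castTP R A h1 ((1:A) ⊗ₜ[R] y) = (1:A) ⊗ₜ[R] castTP R A h y := by
  subst h; rfl

theorem castTP_one_tmul_eq {a b c : ℕ} (h1 : a+1 = c+1) (h2 : b+1 = c+1) (hab : a = b)
    {x : TP R A a} {y : TP R A b} (hxy : castTP R A hab x = y) :
    castTP R A h1 ((1:A) ⊗ₜ[R] x) = castTP R A h2 ((1:A) ⊗ₜ[R] y) := by
  obtain rfl : a = b := hab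
  rw [castTP_same] at hxy
  subst hxy
  rfl

theorem padLeft_1_apply (j : ℕ) (x : TP R A j) :
    padLeft R A 1 j x = (1:A) ⊗ₜ[R] x := rfl

theorem castTP_padLeft_1 {a b : ℕ} (h : a = b) (h1 : a+1 = b+1) (y : TP R A a) :
    castTP R A h1 (padLeft R A 1 a y) = padLeft R A 1 b (castTP R A h y) := by
  subst h; rfl

theorem D3_padLeft_1 (j : ℕ) (y : TP R A (j+2)) :
    D3 R A j (padLeft R A 1 (j+2) y) = (1:A) ⊗ₜ[R] D2 R A j y := D3_one_tmul j y

theorem D2_padLeft_1 (j : ℕ) (y : TP R A (j+1)) :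
    D2 R A j (padLeft R A 1 (j+1) y) = (1:A) ⊗ₜ[R] DFirst R A j y := D2_one_tmul j y

end MoreHelpers

/-- The statement of the theorem, as a predicate. -/
def Stmt (F : TP R A 2) (m n k : ℕ) : Prop :=
  padRight R A n (k + m) (Fmn R A F k m) *
      castTP R A (show m + k + n = k + m + n by ring) (Fmn R A F (m + k) n) =
    castTP R A (show m + n + k = k + m + n by ring)
        (padLeft R A k (m + n) (Fmn R A F m n)) *
      castTP R A (show k + (m + n) = k + m + n by ring) (Fmn R A F k (m + n))

section Bases
variable {R A}
variable (F : TP R A 2)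

theorem stmt_k0 (m n : ℕ) : Stmt R A F m n 0 := by
  unfold Stmt
  rw [Fmn_zero_left F m, map_one, one_mul, Fmn_zero_left F (m+n), castTP_one, mul_one]
  rfl

theorem stmt_m0 (n k : ℕ) : Stmt R A F 0 n k := by
  unfold Stmt
  rw [Fmn_zero_right F k, map_one, one_mul, Fmn_zero_left F n, map_one, castTP_one, one_mul]
  have e1 : Fmn R A F (0+k) n = castTP R A (by omega) (Fmn R A F k n) :=
    Fmn_cast (by omega) rfl (by omega)
  have e2 : Fmn R A F k (0+n) = castTP R A (by omega) (Fmn R A F k n) :=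
    Fmn_cast rfl (by omega) (by omega)
  rw [e1, e2, castTP_castTP, castTP_castTP]

theorem stmt_n0 (m k : ℕ) : Stmt R A F m 0 k := by
  unfold Stmt
  rw [Fmn_zero_right F (m+k), castTP_one, mul_one, Fmn_zero_right F m, map_one,
    castTP_one, one_mul]
  rfl

end Bases

section Step2
variable {R A}
variable (F : TP R A 2)

theorem stmt_1n1
    (hF : padOne R A 2 F * DFirst R A 1 F = padLeft R A 1 2 F * DSecond R A F)
    (n : ℕ) : Stmt R A F 1 (n+1) 1 := by
  induction n with
  | zero =>
    have e21 : Fmn R A F (1+1) (0+1) = DFirst R A 1 F := by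
      show DFirst R A 1 (Gmap R A 0 F) = DFirst R A 1 F
      exact congrArg _ (Fmn11 F)
    unfold Stmt
    rw [Fmn11, e21]
    rw [show Fmn R A F 1 (1+(0+1)) = DSecond R A F from Fmn12 F]
    exact hF
  | succ n IH =>
    unfold Stmt at IH ⊢
    have H := congrArg (fun z => castTP R A (show n+4 = 1+1+(n+1+1) by omega)
      (D3 R A n (castTP R A (show 1+1+(n+1) = n+3 by omega) z))) IH
    simp only [castTP_mul, map_mul] at H
    -- factor 1 : padRight
    have T1 : castTP R A (show n+4 = 1+1+(n+1+1) by omega)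
        (D3 R A n (castTP R A (show 1+1+(n+1) = n+3 by omega)
          (padRight R A (n+1) (1+1) (Fmn R A F 1 1)))) =
        padRight R A (n+1+1) (1+1) (Fmn R A F 1 1) := by
      have t := D3_padRight_dup (R := R) (A := A) n (Fmn R A F 1 1)
        (show 2+(n+1) = n+3 by omega) (show 2+(n+2) = n+4 by omega)
      calc castTP R A (show n+4 = 1+1+(n+1+1) by omega)
            (D3 R A n (castTP R A (show 1+1+(n+1) = n+3 by omega)
              (padRight R A (n+1) (1+1) (Fmn R A F 1 1))))
          = castTP R A (show n+4 = 1+1+(n+1+1) by omega)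
              (castTP R A (show 2+(n+2) = n+4 by omega)
                (padRight R A (n+2) 2 (Fmn R A F 1 1))) := congrArg _ t
        _ = padRight R A (n+1+1) (1+1) (Fmn R A F 1 1) := by
            rw [castTP_castTP]; rfl
    -- factor 2 : Fmn (1+1) (n+1)
    have T2 : castTP R A (show n+4 = 1+1+(n+1+1) by omega)
        (D3 R A n (castTP R A (show 1+1+(n+1) = n+3 by omega)
          (castTP R A (show 1+1+(n+1) = 1+1+(n+1) by omega)
            (Fmn R A F (1+1) (n+1))))) =
        castTP R A (show 1+1+(n+1+1) = 1+1+(n+1+1) by omega)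
          (Fmn R A F (1+1) (n+1+1)) := by
      rw [Fmn_succ F 1 n (show n+2+1 = 1+1+(n+1) by omega), castTP_castTP, castTP_castTP]
      rw [Fmn_succ F 1 (n+1) (show n+1+2+1 = 1+1+(n+1+1) by omega), castTP_castTP]
      have inner : D3 R A n (castTP R A (show n+2+1 = n+3 by omega) (W R A F 1 n)) =
          W R A F 1 (n+1) := by exact W_D3 F n
      rw [inner]
    -- factor 3 : padLeft
    have T3 : castTP R A (show n+4 = 1+1+(n+1+1) by omega)
        (D3 R A n (castTP R A (show 1+1+(n+1) = n+3 by omega)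
          (castTP R A (show 1+(n+1)+1 = 1+1+(n+1) by omega)
            (padLeft R A 1 (1+(n+1)) (Fmn R A F 1 (n+1)))))) =
        castTP R A (show 1+(n+1+1)+1 = 1+1+(n+1+1) by omega)
          (padLeft R A 1 (1+(n+1+1)) (Fmn R A F 1 (n+1+1))) := by
      rw [castTP_castTP]
      rw [castTP_padLeft_1 (show 1+(n+1) = n+2 by omega)]
      rw [D3_padLeft_1]
      have inner : D2 R A n (castTP R A (show 1+(n+1) = n+2 by omega)
          (Fmn R A F 1 (n+1))) = W R A F 0 (n+1) := by
        rw [Fmn_succ F 0 n (show n+2+0 = 1+(n+1) by omega), castTP_castTP]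
        exact W_D2 F n
      rw [inner]
      exact castTP_one_tmul_eq _ _ (by omega) (Fmn_succ F 0 (n+1) (by omega)).symm
    -- factor 4 : Fmn 1 (1+(n+1))
    have T4 : castTP R A (show n+4 = 1+1+(n+1+1) by omega)
        (D3 R A n (castTP R A (show 1+1+(n+1) = n+3 by omega)
          (castTP R A (show 1+(1+(n+1)) = 1+1+(n+1) by omega)
            (Fmn R A F 1 (1+(n+1)))))) =
        castTP R A (show 1+(1+(n+1+1)) = 1+1+(n+1+1) by omega)
          (Fmn R A F 1 (1+(n+1+1))) := by
      rw [show Fmn R A F 1 (1+(n+1)) = castTP R A (by omega) (Fmn R A F 1 (n+1+1)) from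
        Fmn_cast rfl (by omega) (by omega)]
      rw [Fmn_succ F 0 (n+1) (show n+1+2+0 = 1+(n+1+1) by omega)]
      rw [castTP_castTP, castTP_castTP, castTP_castTP]
      have inner : D3 R A n (castTP R A (show n+1+2+0 = n+3 by omega)
          (W R A F 0 (n+1))) = W R A F 0 (n+1+1) := by exact W_D3_low F n
      rw [inner]
      rw [show Fmn R A F 1 (1+(n+1+1)) = castTP R A (by omega) (Fmn R A F 1 (n+1+1+1)) from
        Fmn_cast rfl (by omega) (by omega)]
      rw [Fmn_succ F 0 (n+1+1) (show n+1+1+2+0 = 1+(n+1+1+1) by omega)]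
      rw [castTP_castTP, castTP_castTP]
    rw [T1, T2, T3, T4] at H
    exact H

end Step2

section Recast
variable {R A}

theorem DFirst_recast {a b s : ℕ} (h1 : s = b+1) (h2 : s = a+1) (h3 : a+2 = b+2)
    (x : TP R A s) :
    DFirst R A b (castTP R A h1 x) = castTP R A h3 (DFirst R A a (castTP R A h2 x)) := by
  obtain rfl : a = b := by omega
  rfl

theorem D2_recast {a b s : ℕ} (h1 : s = b+2) (h2 : s = a+2) (h3 : a+3 = b+3)
    (x : TP R A s) :
    D2 R A b (castTP R A h1 x) = castTP R A h3 (D2 R A a (castTP R A h2 x)) := by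
  obtain rfl : a = b := by omega
  rfl

end Recast

section Step3
variable {R A}
variable (F : TP R A 2)

theorem stmt_mn1
    (hF : padOne R A 2 F * DFirst R A 1 F = padLeft R A 1 2 F * DSecond R A F)
    (μ ν : ℕ) : Stmt R A F (μ+1) (ν+1) 1 := by
  induction μ with
  | zero => exact stmt_1n1 F hF ν
  | succ μ IH =>
    unfold Stmt at IH ⊢
    have H := congrArg (fun z => castTP R A (show μ+ν+4 = 1+(μ+1+1)+(ν+1) by omega)
      (D2 R A (μ+ν+1) (castTP R A (show 1+(μ+1)+(ν+1) = μ+ν+3 by omega) z))) IH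
    simp only [castTP_mul, map_mul] at H
    -- factor 1 : padRight (ν+1) (1+(μ+1)) (Fmn F 1 (μ+1))
    have T1 : castTP R A (show μ+ν+4 = 1+(μ+1+1)+(ν+1) by omega)
        (D2 R A (μ+ν+1) (castTP R A (show 1+(μ+1)+(ν+1) = μ+ν+3 by omega)
          (padRight R A (ν+1) (1+(μ+1)) (Fmn R A F 1 (μ+1))))) =
        padRight R A (ν+1) (1+(μ+1+1)) (Fmn R A F 1 (μ+1+1)) := by
      rw [Fmn_succ F 0 μ (show μ+2+0 = 1+(μ+1) by omega)]
      rw [padRight_cast (show μ+2+0 = 1+(μ+1) by omega)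
        (show μ+2+0+(ν+1) = 1+(μ+1)+(ν+1) by omega), castTP_castTP]
      have t := D2_padRight (R := R) (A := A) (ν+1) μ (W R A F 0 μ)
        (show μ+2+(ν+1) = μ+(ν+1)+2 by omega) (show μ+3+(ν+1) = μ+(ν+1)+3 by omega)
      calc castTP R A (show μ+ν+4 = 1+(μ+1+1)+(ν+1) by omega)
            (D2 R A (μ+ν+1) (castTP R A (by omega)
              (padRight R A (ν+1) (μ+2+0) (W R A F 0 μ))))
          = castTP R A (show μ+ν+4 = 1+(μ+1+1)+(ν+1) by omega)
              (castTP R A (show μ+3+(ν+1) = μ+ν+4 by omega)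
                (padRight R A (ν+1) (μ+3) (D2 R A μ (W R A F 0 μ)))) := congrArg _ t
        _ = castTP R A (show μ+3+(ν+1) = 1+(μ+1+1)+(ν+1) by omega)
              (padRight R A (ν+1) (μ+3) (D2 R A μ (W R A F 0 μ))) := castTP_castTP _ _ _
        _ = castTP R A (show μ+3+(ν+1) = 1+(μ+1+1)+(ν+1) by omega)
              (padRight R A (ν+1) (μ+3) (W R A F 0 (μ+1))) := by rw [W_D2 F μ]
        _ = padRight R A (ν+1) (1+(μ+1+1)) (Fmn R A F 1 (μ+1+1)) := by
            rw [Fmn_succ F 0 (μ+1) (show μ+1+2+0 = 1+(μ+1+1) by omega)]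
            rw [padRight_cast (show μ+1+2+0 = 1+(μ+1+1) by omega)
              (show μ+1+2+0+(ν+1) = 1+(μ+1+1)+(ν+1) by omega)]
    -- factor 2 : Fmn (μ+1+1) (ν+1)
    have T2 : castTP R A (show μ+ν+4 = 1+(μ+1+1)+(ν+1) by omega)
        (D2 R A (μ+ν+1) (castTP R A (show 1+(μ+1)+(ν+1) = μ+ν+3 by omega)
          (castTP R A (show μ+1+1+(ν+1) = 1+(μ+1)+(ν+1) by omega)
            (Fmn R A F (μ+1+1) (ν+1))))) =
        castTP R A (show μ+1+1+1+(ν+1) = 1+(μ+1+1)+(ν+1) by omega)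
          (Fmn R A F (μ+1+1+1) (ν+1)) := by
      rw [Fmn_succ F (μ+1) ν (show ν+2+(μ+1) = μ+1+1+(ν+1) by omega)]
      rw [castTP_castTP, castTP_castTP]
      rw [D2_recast (show ν+2+(μ+1) = μ+ν+3 by omega)
        (show ν+2+(μ+1) = ν+1+μ+2 by omega) (show ν+1+μ+3 = μ+ν+4 by omega)]
      rw [W_D2_high F μ ν (show ν+2+(μ+1) = ν+1+μ+2 by omega)
        (show ν+2+(μ+2) = ν+1+μ+3 by omega)]
      rw [Fmn_succ F (μ+1+1) ν (show ν+2+(μ+1+1) = μ+1+1+1+(ν+1) by omega)]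
      rw [castTP_castTP, castTP_castTP, castTP_castTP]
    -- factor 3 : padLeft
    have T3 : castTP R A (show μ+ν+4 = 1+(μ+1+1)+(ν+1) by omega)
        (D2 R A (μ+ν+1) (castTP R A (show 1+(μ+1)+(ν+1) = μ+ν+3 by omega)
          (castTP R A (show μ+1+(ν+1)+1 = 1+(μ+1)+(ν+1) by omega)
            (padLeft R A 1 (μ+1+(ν+1)) (Fmn R A F (μ+1) (ν+1)))))) =
        castTP R A (show μ+1+1+(ν+1)+1 = 1+(μ+1+1)+(ν+1) by omega)
          (padLeft R A 1 (μ+1+1+(ν+1)) (Fmn R A F (μ+1+1) (ν+1))) := by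
      rw [castTP_castTP]
      rw [castTP_padLeft_1 (show μ+1+(ν+1) = μ+ν+2 by omega)]
      rw [D2_padLeft_1]
      rw [Fmn_succ F μ ν (show ν+2+μ = μ+1+(ν+1) by omega), castTP_castTP]
      rw [DFirst_recast (show ν+2+μ = μ+ν+2 by omega)
        (show ν+2+μ = ν+1+μ+1 by omega) (show ν+1+μ+2 = μ+ν+3 by omega)]
      rw [← W_succ F μ ν (show ν+2+μ = ν+1+μ+1 by omega)
        (show ν+2+(μ+1) = ν+1+μ+2 by omega)]
      rw [castTP_castTP]
      exact castTP_one_tmul_eq _ _ (by omega) (by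
        rw [castTP_castTP]
        exact (Fmn_succ F (μ+1) ν (by omega)).symm)
    -- factor 4 : Fmn 1 (μ+1+(ν+1))
    have T4 : castTP R A (show μ+ν+4 = 1+(μ+1+1)+(ν+1) by omega)
        (D2 R A (μ+ν+1) (castTP R A (show 1+(μ+1)+(ν+1) = μ+ν+3 by omega)
          (castTP R A (show 1+(μ+1+(ν+1)) = 1+(μ+1)+(ν+1) by omega)
            (Fmn R A F 1 (μ+1+(ν+1)))))) =
        castTP R A (show 1+(μ+1+1+(ν+1)) = 1+(μ+1+1)+(ν+1) by omega)
          (Fmn R A F 1 (μ+1+1+(ν+1))) := by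
      rw [show Fmn R A F 1 (μ+1+(ν+1)) = castTP R A (by omega)
        (Fmn R A F 1 (μ+ν+1+1)) from Fmn_cast rfl (by omega) (by omega)]
      rw [Fmn_succ F 0 (μ+ν+1) (show μ+ν+1+2+0 = 1+(μ+ν+1+1) by omega)]
      rw [castTP_castTP, castTP_castTP, castTP_castTP]
      have inner : D2 R A (μ+ν+1) (castTP R A (show μ+ν+1+2+0 = μ+ν+3 by omega)
          (W R A F 0 (μ+ν+1))) = W R A F 0 (μ+ν+1+1) := by exact W_D2 F (μ+ν+1)
      rw [inner]
      rw [show Fmn R A F 1 (μ+1+1+(ν+1)) = castTP R A (by omega)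
        (Fmn R A F 1 (μ+ν+1+1+1)) from Fmn_cast rfl (by omega) (by omega)]
      rw [Fmn_succ F 0 (μ+ν+1+1) (show μ+ν+1+1+2+0 = 1+(μ+ν+1+1+1) by omega)]
      rw [castTP_castTP, castTP_castTP]
    rw [T1, T2, T3, T4] at H
    exact H

end Step3

section Step4
variable {R A}
variable (F : TP R A 2)

theorem stmt_pos
    (hF : padOne R A 2 F * DFirst R A 1 F = padLeft R A 1 2 F * DSecond R A F)
    (μ ν κ : ℕ) : Stmt R A F (μ+1) (ν+1) (κ+1) := by
  induction κ with
  | zero => exact stmt_mn1 F hF μ ν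
  | succ κ IH =>
    unfold Stmt at IH ⊢
    have H := congrArg (fun z => castTP R A (show κ+μ+ν+4 = κ+1+1+(μ+1)+(ν+1) by omega)
      (DFirst R A (κ+μ+ν+2)
        (castTP R A (show κ+1+(μ+1)+(ν+1) = κ+μ+ν+3 by omega) z))) IH
    simp only [castTP_mul, map_mul] at H
    -- factor 1 : padRight (ν+1) (κ+1+(μ+1)) (Fmn (κ+1) (μ+1))
    have T1 : castTP R A (show κ+μ+ν+4 = κ+1+1+(μ+1)+(ν+1) by omega)
        (DFirst R A (κ+μ+ν+2) (castTP R A (show κ+1+(μ+1)+(ν+1) = κ+μ+ν+3 by omega)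
          (padRight R A (ν+1) (κ+1+(μ+1)) (Fmn R A F (κ+1) (μ+1))))) =
        padRight R A (ν+1) (κ+1+1+(μ+1)) (Fmn R A F (κ+1+1) (μ+1)) := by
      rw [Fmn_succ F κ μ (show μ+2+κ = κ+1+(μ+1) by omega)]
      rw [show W R A F κ μ = castTP R A (show μ+1+κ+1 = μ+2+κ by omega)
        (castTP R A (show μ+2+κ = μ+1+κ+1 by omega) (W R A F κ μ)) from by
          rw [castTP_castTP]; rfl]
      rw [castTP_castTP]
      rw [padRight_cast (show μ+1+κ+1 = κ+1+(μ+1) by omega)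
        (show μ+1+κ+1+(ν+1) = κ+1+(μ+1)+(ν+1) by omega)]
      rw [castTP_castTP]
      rw [DFirst_recast (show μ+1+κ+1+(ν+1) = κ+μ+ν+3 by omega)
        (show μ+1+κ+1+(ν+1) = μ+1+κ+(ν+1)+1 by omega)
        (show μ+1+κ+(ν+1)+2 = κ+μ+ν+4 by omega)]
      rw [DFirst_padRight (ν+1) (μ+1+κ)
        (castTP R A (show μ+2+κ = μ+1+κ+1 by omega) (W R A F κ μ))
        (show μ+1+κ+1+(ν+1) = μ+1+κ+(ν+1)+1 by omega)
        (show μ+1+κ+2+(ν+1) = μ+1+κ+(ν+1)+2 by omega)]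
      rw [← W_succ F κ μ (show μ+2+κ = μ+1+κ+1 by omega)
        (show μ+2+(κ+1) = μ+1+κ+2 by omega)]
      rw [padRight_cast (show μ+2+(κ+1) = μ+1+κ+2 by omega)
        (show μ+2+(κ+1)+(ν+1) = μ+1+κ+2+(ν+1) by omega)]
      rw [Fmn_succ F (κ+1) μ (show μ+2+(κ+1) = κ+1+1+(μ+1) by omega)]
      rw [padRight_cast (show μ+2+(κ+1) = κ+1+1+(μ+1) by omega)
        (show μ+2+(κ+1)+(ν+1) = κ+1+1+(μ+1)+(ν+1) by omega)]
      simp only [castTP_castTP]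
    -- factor 2 : Fmn (μ+1+(κ+1)) (ν+1)
    have T2 : castTP R A (show κ+μ+ν+4 = κ+1+1+(μ+1)+(ν+1) by omega)
        (DFirst R A (κ+μ+ν+2) (castTP R A (show κ+1+(μ+1)+(ν+1) = κ+μ+ν+3 by omega)
          (castTP R A (show μ+1+(κ+1)+(ν+1) = κ+1+(μ+1)+(ν+1) by omega)
            (Fmn R A F (μ+1+(κ+1)) (ν+1))))) =
        castTP R A (show μ+1+(κ+1+1)+(ν+1) = κ+1+1+(μ+1)+(ν+1) by omega)
          (Fmn R A F (μ+1+(κ+1+1)) (ν+1)) := by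
      rw [show Fmn R A F (μ+1+(κ+1)) (ν+1) = castTP R A (by omega)
        (Fmn R A F (μ+κ+1+1) (ν+1)) from Fmn_cast (by omega) rfl (by omega)]
      rw [Fmn_succ F (μ+κ+1) ν (show ν+2+(μ+κ+1) = μ+κ+1+1+(ν+1) by omega)]
      rw [castTP_castTP, castTP_castTP, castTP_castTP]
      rw [DFirst_recast (show ν+2+(μ+κ+1) = κ+μ+ν+3 by omega)
        (show ν+2+(μ+κ+1) = ν+1+(μ+κ+1)+1 by omega)
        (show ν+1+(μ+κ+1)+2 = κ+μ+ν+4 by omega)]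
      rw [← W_succ F (μ+κ+1) ν (show ν+2+(μ+κ+1) = ν+1+(μ+κ+1)+1 by omega)
        (show ν+2+(μ+κ+1+1) = ν+1+(μ+κ+1)+2 by omega)]
      rw [show Fmn R A F (μ+1+(κ+1+1)) (ν+1) = castTP R A (by omega)
        (Fmn R A F (μ+κ+1+1+1) (ν+1)) from Fmn_cast (by omega) rfl (by omega)]
      rw [Fmn_succ F (μ+κ+1+1) ν (show ν+2+(μ+κ+1+1) = μ+κ+1+1+1+(ν+1) by omega)]
      simp only [castTP_castTP]
    -- factor 3 : padLeft (κ+1)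
    have T3 : castTP R A (show κ+μ+ν+4 = κ+1+1+(μ+1)+(ν+1) by omega)
        (DFirst R A (κ+μ+ν+2) (castTP R A (show κ+1+(μ+1)+(ν+1) = κ+μ+ν+3 by omega)
          (castTP R A (show μ+1+(ν+1)+(κ+1) = κ+1+(μ+1)+(ν+1) by omega)
            (padLeft R A (κ+1) (μ+1+(ν+1)) (Fmn R A F (μ+1) (ν+1)))))) =
        castTP R A (show μ+1+(ν+1)+(κ+1+1) = κ+1+1+(μ+1)+(ν+1) by omega)
          (padLeft R A (κ+1+1) (μ+1+(ν+1)) (Fmn R A F (μ+1) (ν+1))) := by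
      rw [castTP_castTP]
      rw [DFirst_recast (show μ+1+(ν+1)+(κ+1) = κ+μ+ν+3 by omega)
        (show μ+1+(ν+1)+(κ+1) = μ+1+(ν+1)+κ+1 by omega)
        (show μ+1+(ν+1)+κ+2 = κ+μ+ν+4 by omega)]
      have inner : DFirst R A (μ+1+(ν+1)+κ)
          (castTP R A (show μ+1+(ν+1)+(κ+1) = μ+1+(ν+1)+κ+1 by omega)
            (padLeft R A (κ+1) (μ+1+(ν+1)) (Fmn R A F (μ+1) (ν+1)))) =
          padLeft R A (κ+2) (μ+1+(ν+1)) (Fmn R A F (μ+1) (ν+1)) := by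
        exact DFirst_padLeft κ (μ+1+(ν+1)) _
      rw [inner, castTP_castTP]
    -- factor 4 : Fmn (κ+1) (μ+1+(ν+1))
    have T4 : castTP R A (show κ+μ+ν+4 = κ+1+1+(μ+1)+(ν+1) by omega)
        (DFirst R A (κ+μ+ν+2) (castTP R A (show κ+1+(μ+1)+(ν+1) = κ+μ+ν+3 by omega)
          (castTP R A (show κ+1+(μ+1+(ν+1)) = κ+1+(μ+1)+(ν+1) by omega)
            (Fmn R A F (κ+1) (μ+1+(ν+1)))))) =
        castTP R A (show κ+1+1+(μ+1+(ν+1)) = κ+1+1+(μ+1)+(ν+1) by omega)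
          (Fmn R A F (κ+1+1) (μ+1+(ν+1))) := by
      rw [show Fmn R A F (κ+1) (μ+1+(ν+1)) = castTP R A (by omega)
        (Fmn R A F (κ+1) (μ+ν+1+1)) from Fmn_cast rfl (by omega) (by omega)]
      rw [Fmn_succ F κ (μ+ν+1) (show μ+ν+1+2+κ = κ+1+(μ+ν+1+1) by omega)]
      rw [castTP_castTP, castTP_castTP, castTP_castTP]
      rw [DFirst_recast (show μ+ν+1+2+κ = κ+μ+ν+3 by omega)
        (show μ+ν+1+2+κ = μ+ν+1+1+κ+1 by omega)
        (show μ+ν+1+1+κ+2 = κ+μ+ν+4 by omega)]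
      rw [← W_succ F κ (μ+ν+1) (show μ+ν+1+2+κ = μ+ν+1+1+κ+1 by omega)
        (show μ+ν+1+2+(κ+1) = μ+ν+1+1+κ+2 by omega)]
      rw [show Fmn R A F (κ+1+1) (μ+1+(ν+1)) = castTP R A (by omega)
        (Fmn R A F (κ+1+1) (μ+ν+1+1)) from Fmn_cast rfl (by omega) (by omega)]
      rw [Fmn_succ F (κ+1) (μ+ν+1) (show μ+ν+1+2+(κ+1) = κ+1+1+(μ+ν+1+1) by omega)]
      simp only [castTP_castTP]
    rw [T1, T2, T3, T4] at H
    exact H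

theorem stmt_all
    (hF : padOne R A 2 F * DFirst R A 1 F = padLeft R A 1 2 F * DSecond R A F) :
    ∀ m n k : ℕ, Stmt R A F m n k
  | 0, n, k => stmt_m0 F n k
  | m+1, n, 0 => stmt_k0 F (m+1) n
  | m+1, 0, k+1 => stmt_n0 F (m+1) (k+1)
  | μ+1, ν+1, κ+1 => stmt_pos F hF μ ν κ

end Step4

/-- if `F` is an invertible element of `A ⊗ A` (for a Hopf algebra —
more generally a bialgebra — `A`) satisfying the twist equation
`F·(Δ⊗id)(F) = F^{↑1}·(id⊗Δ)(F)`, and `F_{m,n} = (Δ^{m-1}⊗Δ^{n-1})(F)` with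
`F_{m,0} = F_{0,m} = 1`, then `F_{k,m}·F_{m+k,n} = (F_{m,n})^{↑k}·F_{k,m+n}`
for all `m, n, k ≥ 0`. -/
theorem stmt_13 (F : TP R A 2) (hinv : IsUnit F)
    (hF : padOne R A 2 F * DFirst R A 1 F =
      padLeft R A 1 2 F * DSecond R A F) :
    ∀ m n k : ℕ,
      padRight R A n (k + m) (Fmn R A F k m) *
          castTP R A (show m + k + n = k + m + n by omega) (Fmn R A F (m + k) n) =
        castTP R A (show m + n + k = k + m + n by omega)
            (padLeft R A k (m + n) (Fmn R A F m n)) *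
          castTP R A (show k + (m + n) = k + m + n by omega) (Fmn R A F k (m + n)) := by
  intro m n k
  exact stmt_all F hF m n k
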